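/- arXiv:1904.09455 — 3 statements merged into one kernel-verified Lean document; each statement's English description precedes it below -/
import Mathlib

section
/- For a constant skew-symmetric bilinear form σ on ℂ², the Moyal product f ⋆ g = Σ_{n≥0} (ℏⁿ/n!) Σ σ^{i₁j₁}⋯σ^{iₙjₙ} ∂_{i₁}⋯∂_{iₙ}(f) · ∂_{j₁}⋯∂_{jₙ}(g) is an associative product on ℂ[z,u][[ℏ]]. -/
/- STATEMENT 1: For a constant skew-symmetric bilinear form σ on ℂ², the Moyal product
`f ⋆ g = Σ_{n≥0} (ℏⁿ/n!) Σ σ^{i₁j₁}⋯σ^{iₙjₙ} ∂_{i₁}⋯∂_{iₙ}(f) · ∂_{j₁}⋯∂_{jₙ}(g)`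
is an associative (ℂ[[ℏ]]-bilinear) product on ℂ[z,u][[ℏ]]. -/

open MvPolynomial

noncomputable section

abbrev P2 : Type := MvPolynomial (Fin 2) ℂ

/-- Iterated partial derivative along a list of coordinate directions. -/
def iterD {n : ℕ} (v : Fin n → Fin 2) (f : P2) : P2 :=
  (List.ofFn v).foldr (fun i g => pderiv i g) f

/-- The `n`-th Moyal bidifferential operator for the constant bivector `σ`. -/
def moyalB (σ : Fin 2 → Fin 2 → ℂ) (n : ℕ) (f g : P2) : P2 :=
  ((n.factorial : ℂ))⁻¹ •
    ∑ vw : (Fin n → Fin 2) × (Fin n → Fin 2),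
      (∏ t : Fin n, σ (vw.1 t) (vw.2 t)) • (iterD vw.1 f * iterD vw.2 g)

/-- The Moyal star product on `ℂ[z,u][[ℏ]]`, extended `ℂ[[ℏ]]`-bilinearly:
the coefficient of `ℏ^N` in `f ⋆ g` is `Σ_{n+a+b=N} Bₙ(f_a, g_b)`. -/
def moyalStar (σ : Fin 2 → Fin 2 → ℂ) (f g : PowerSeries P2) : PowerSeries P2 :=
  PowerSeries.mk fun N =>
    ∑ t ∈ Finset.HasAntidiagonal.antidiagonal N, ∑ ab ∈ Finset.HasAntidiagonal.antidiagonal t.2,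
      moyalB σ t.1 (PowerSeries.coeff (R := P2) ab.1 f) (PowerSeries.coeff (R := P2) ab.2 g)

open TensorProduct

lemma pderiv_comm' (i j : Fin 2) (p : P2) :
    pderiv i (pderiv j p) = pderiv j (pderiv i p) := by
  induction p using MvPolynomial.induction_on with
  | C a => simp
  | add p q hp hq => simp [hp, hq]
  | mul_X p k hp =>
    have hone : ∀ (a b k : Fin 2), (pderiv a) ((Pi.single b (1 : P2) : Fin 2 → P2) k) = 0 := by
      intro a b k; rcases eq_or_ne b k with h | h <;> simp [Pi.single_apply, h]
    simp [pderiv_mul, hp, hone]; ring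

abbrev T2 : Type := P2 ⊗[ℂ] P2
abbrev T3 : Type := P2 ⊗[ℂ] T2

def dC (i : Fin 2) : P2 →ₗ[ℂ] P2 := (pderiv i).toLinearMap

def Dop (σ : Fin 2 → Fin 2 → ℂ) : Module.End ℂ T2 :=
  ∑ p : Fin 2 × Fin 2, σ p.1 p.2 • TensorProduct.map (dC p.1) (dC p.2)

def D12 (σ : Fin 2 → Fin 2 → ℂ) : Module.End ℂ T3 :=
  ∑ p : Fin 2 × Fin 2, σ p.1 p.2 • TensorProduct.map (dC p.1) (LinearMap.rTensor P2 (dC p.2))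

def D13 (σ : Fin 2 → Fin 2 → ℂ) : Module.End ℂ T3 :=
  ∑ p : Fin 2 × Fin 2, σ p.1 p.2 • TensorProduct.map (dC p.1) (LinearMap.lTensor P2 (dC p.2))

def D23 (σ : Fin 2 → Fin 2 → ℂ) : Module.End ℂ T3 := LinearMap.lTensor P2 (Dop σ)

def muP : T2 →ₗ[ℂ] P2 := LinearMap.mul' ℂ P2

def Mr : T3 →ₗ[ℂ] T2 := LinearMap.lTensor P2 muP

def Ml : T3 →ₗ[ℂ] T2 :=
  (LinearMap.rTensor P2 muP) ∘ₗ (TensorProduct.assoc ℂ P2 P2 P2).symm.toLinearMap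

@[simp] lemma Mr_tmul (a b c : P2) : Mr (a ⊗ₜ (b ⊗ₜ c)) = a ⊗ₜ (b * c) := by
  simp [Mr, muP, LinearMap.mul'_apply]

@[simp] lemma Ml_tmul (a b c : P2) : Ml (a ⊗ₜ (b ⊗ₜ c)) = (a * b) ⊗ₜ c := by
  simp [Ml, muP, LinearMap.mul'_apply]

lemma dC_comm (i j : Fin 2) : (dC i) ∘ₗ (dC j) = (dC j) ∘ₗ (dC i) := by
  apply LinearMap.ext; intro p; exact pderiv_comm' i j p

lemma comm_mapmap (i j k l : Fin 2) :
    Commute (TensorProduct.map (dC i) (dC j) : Module.End ℂ T2)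
      (TensorProduct.map (dC k) (dC l)) := by
  show _ * _ = _ * _
  simp only [Module.End.mul_eq_comp, ← TensorProduct.map_comp, dC_comm]

lemma comm_Dop_rT (j : Fin 2) (σ : Fin 2 → Fin 2 → ℂ) :
    Commute (LinearMap.rTensor P2 (dC j) : Module.End ℂ T2) (Dop σ) := by
  apply Commute.sum_right
  intro p _
  apply Commute.smul_right
  show _ * _ = _ * _
  simp only [Module.End.mul_eq_comp, LinearMap.rTensor, ← TensorProduct.map_comp, dC_comm,
    LinearMap.comp_id, LinearMap.id_comp]

lemma comm_Dop_lT (j : Fin 2) (σ : Fin 2 → Fin 2 → ℂ) :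
    Commute (LinearMap.lTensor P2 (dC j) : Module.End ℂ T2) (Dop σ) := by
  apply Commute.sum_right
  intro p _
  apply Commute.smul_right
  show _ * _ = _ * _
  simp only [Module.End.mul_eq_comp, LinearMap.lTensor, ← TensorProduct.map_comp, dC_comm,
    LinearMap.comp_id, LinearMap.id_comp]

lemma comm_D12_D13 (σ : Fin 2 → Fin 2 → ℂ) : Commute (D12 σ) (D13 σ) := by
  apply Commute.sum_left; intro p _; apply Commute.sum_right; intro q _
  apply Commute.smul_left; apply Commute.smul_right
  show _ * _ = _ * _
  simp only [Module.End.mul_eq_comp, ← TensorProduct.map_comp, dC_comm,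
    LinearMap.lTensor_comp_rTensor, LinearMap.rTensor_comp_lTensor]

lemma comm_D12_D23 (σ : Fin 2 → Fin 2 → ℂ) : Commute (D12 σ) (D23 σ) := by
  apply Commute.sum_left; intro p _
  apply Commute.smul_left
  show _ * _ = _ * _
  have : (D23 σ : Module.End ℂ T3) = TensorProduct.map LinearMap.id (Dop σ) := rfl
  rw [this]
  simp only [Module.End.mul_eq_comp, ← TensorProduct.map_comp, LinearMap.comp_id,
    LinearMap.id_comp]
  rw [← Module.End.mul_eq_comp, ← Module.End.mul_eq_comp, (comm_Dop_rT p.2 σ).eq]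

lemma comm_D13_D23 (σ : Fin 2 → Fin 2 → ℂ) : Commute (D13 σ) (D23 σ) := by
  apply Commute.sum_left; intro p _
  apply Commute.smul_left
  show _ * _ = _ * _
  have hD : (D23 σ : Module.End ℂ T3) = TensorProduct.map LinearMap.id (Dop σ) := rfl
  rw [hD]
  simp only [Module.End.mul_eq_comp, ← TensorProduct.map_comp, LinearMap.comp_id,
    LinearMap.id_comp]
  rw [← Module.End.mul_eq_comp, ← Module.End.mul_eq_comp, (comm_Dop_lT p.2 σ).eq]

@[simp] lemma dC_apply (i : Fin 2) (p : P2) : dC i p = pderiv i p := rfl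

lemma Dop_comp_Mr (σ : Fin 2 → Fin 2 → ℂ) :
    (Dop σ) ∘ₗ Mr = Mr ∘ₗ (D12 σ + D13 σ) := by
  apply TensorProduct.ext'; intro a y
  induction y using TensorProduct.induction_on with
  | zero => simp only [TensorProduct.tmul_zero, LinearMap.map_zero]
  | add u v hu hv =>
    simp only [TensorProduct.tmul_add, map_add] at hu hv ⊢; rw [hu, hv]
  | tmul b c =>
    simp only [LinearMap.comp_apply, Mr_tmul, LinearMap.add_apply, map_add]
    simp only [Dop, D12, D13, LinearMap.sum_apply, LinearMap.smul_apply,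
      TensorProduct.map_tmul, LinearMap.rTensor_tmul, LinearMap.lTensor_tmul, dC_apply,
      map_sum, map_smul, Mr_tmul]
    rw [← Finset.sum_add_distrib]
    refine Finset.sum_congr rfl fun p _ => ?_
    rw [pderiv_mul, TensorProduct.tmul_add, smul_add]

lemma Dop_comp_Ml (σ : Fin 2 → Fin 2 → ℂ) :
    (Dop σ) ∘ₗ Ml = Ml ∘ₗ (D13 σ + D23 σ) := by
  apply TensorProduct.ext'; intro a y
  induction y using TensorProduct.induction_on with
  | zero => simp only [TensorProduct.tmul_zero, LinearMap.map_zero]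
  | add u v hu hv =>
    simp only [TensorProduct.tmul_add, map_add] at hu hv ⊢; rw [hu, hv]
  | tmul b c =>
    simp only [LinearMap.comp_apply, Ml_tmul, LinearMap.add_apply, map_add]
    simp only [Dop, D13, D23, LinearMap.sum_apply, LinearMap.smul_apply,
      TensorProduct.map_tmul, LinearMap.rTensor_tmul, LinearMap.lTensor_tmul, dC_apply,
      map_sum, map_smul, Ml_tmul, TensorProduct.tmul_sum, TensorProduct.tmul_smul]
    rw [← Finset.sum_add_distrib]
    refine Finset.sum_congr rfl fun p _ => ?_
    rw [pderiv_mul, TensorProduct.add_tmul, smul_add]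

lemma Dop_pow_Mr (σ : Fin 2 → Fin 2 → ℂ) (n : ℕ) (x : T3) :
    (Dop σ ^ n) (Mr x) = Mr (((D12 σ + D13 σ) ^ n) x) := by
  induction n with
  | zero => simp only [pow_zero, Module.End.one_apply]
  | succ n ih =>
    rw [pow_succ', pow_succ', Module.End.mul_apply, Module.End.mul_apply, ih,
      ← LinearMap.comp_apply, Dop_comp_Mr, LinearMap.comp_apply]

lemma Dop_pow_Ml (σ : Fin 2 → Fin 2 → ℂ) (n : ℕ) (x : T3) :
    (Dop σ ^ n) (Ml x) = Ml (((D13 σ + D23 σ) ^ n) x) := by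
  induction n with
  | zero => simp only [pow_zero, Module.End.one_apply]
  | succ n ih =>
    rw [pow_succ', pow_succ', Module.End.mul_apply, Module.End.mul_apply, ih,
      ← LinearMap.comp_apply, Dop_comp_Ml, LinearMap.comp_apply]

lemma D23_pow_tmul (σ : Fin 2 → Fin 2 → ℂ) (m : ℕ) (f : P2) (z : T2) :
    ((D23 σ) ^ m) (f ⊗ₜ[ℂ] z) = f ⊗ₜ[ℂ] ((Dop σ ^ m) z) := by
  induction m with
  | zero => simp only [pow_zero, Module.End.one_apply]
  | succ m ih =>
    rw [pow_succ', pow_succ', Module.End.mul_apply, Module.End.mul_apply, ih]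
    simp [D23]

def insR (h : P2) : P2 →ₗ[ℂ] T2 := (TensorProduct.mk ℂ P2 P2).flip h

@[simp] lemma insR_apply (h a : P2) : insR h a = a ⊗ₜ[ℂ] h := rfl

lemma D12_comp_ins (σ : Fin 2 → Fin 2 → ℂ) (h : P2) :
    (D12 σ) ∘ₗ (LinearMap.lTensor P2 (insR h)) = (LinearMap.lTensor P2 (insR h)) ∘ₗ Dop σ := by
  ext a b
  simp [D12, Dop, LinearMap.sum_apply, TensorProduct.map_tmul, map_sum, map_smul]

lemma D12_pow_ins (σ : Fin 2 → Fin 2 → ℂ) (h : P2) (n : ℕ) (x : T2) :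
    ((D12 σ) ^ n) ((LinearMap.lTensor P2 (insR h)) x)
      = (LinearMap.lTensor P2 (insR h)) ((Dop σ ^ n) x) := by
  induction n with
  | zero => simp only [pow_zero, Module.End.one_apply]
  | succ n ih =>
    rw [pow_succ', pow_succ', Module.End.mul_apply, Module.End.mul_apply, ih,
      ← LinearMap.comp_apply, D12_comp_ins, LinearMap.comp_apply]

lemma Ml_ins (h : P2) (x : T2) :
    Ml ((LinearMap.lTensor P2 (insR h)) x) = insR h (muP x) := by
  have : Ml ∘ₗ (LinearMap.lTensor P2 (insR h)) = (insR h) ∘ₗ muP := by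
    ext a b
    simp [muP, LinearMap.mul'_apply]
  calc Ml ((LinearMap.lTensor P2 (insR h)) x) = (Ml ∘ₗ LinearMap.lTensor P2 (insR h)) x := rfl
    _ = _ := by rw [this]; rfl

lemma muMl_eq_muMr (x : T3) : muP (Ml x) = muP (Mr x) := by
  have : muP ∘ₗ Ml = muP ∘ₗ Mr := by
    ext a b c
    simp [muP, LinearMap.mul'_apply, mul_assoc, add_assoc]
  calc muP (Ml x) = (muP ∘ₗ Ml) x := rfl
    _ = _ := by rw [this]; rfl

lemma iterD_cons {n : ℕ} (i : Fin 2) (v : Fin n → Fin 2) (f : P2) :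
    iterD (Fin.cons i v) f = pderiv i (iterD v f) := by
  unfold iterD
  rw [List.ofFn_succ]
  simp only [Fin.cons_zero, Fin.cons_succ, List.foldr_cons]

lemma Dop_tmul (σ : Fin 2 → Fin 2 → ℂ) (x y : P2) :
    Dop σ (x ⊗ₜ[ℂ] y)
      = ∑ p : Fin 2 × Fin 2, σ p.1 p.2 • ((pderiv p.1 x) ⊗ₜ[ℂ] (pderiv p.2 y)) := by
  simp [Dop, LinearMap.sum_apply, TensorProduct.map_tmul]

lemma Dpow_tmul (σ : Fin 2 → Fin 2 → ℂ) (n : ℕ) (f g : P2) :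
    (Dop σ ^ n) (f ⊗ₜ[ℂ] g)
      = ∑ vw : (Fin n → Fin 2) × (Fin n → Fin 2),
          (∏ t : Fin n, σ (vw.1 t) (vw.2 t)) • (iterD vw.1 f ⊗ₜ[ℂ] iterD vw.2 g) := by
  induction n with
  | zero =>
    simp [iterD, List.ofFn_zero]
  | succ n ih =>
    rw [pow_succ', Module.End.mul_apply, ih, map_sum]
    have lhs_eq : ∀ vw : (Fin n → Fin 2) × (Fin n → Fin 2),
        Dop σ ((∏ t : Fin n, σ (vw.1 t) (vw.2 t)) • (iterD vw.1 f ⊗ₜ[ℂ] iterD vw.2 g))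
          = ∑ p : Fin 2 × Fin 2,
              (σ p.1 p.2 * ∏ t : Fin n, σ (vw.1 t) (vw.2 t)) •
                ((pderiv p.1 (iterD vw.1 f)) ⊗ₜ[ℂ] (pderiv p.2 (iterD vw.2 g))) := by
      intro vw
      rw [map_smul, Dop_tmul, Finset.smul_sum]
      refine Finset.sum_congr rfl fun p _ => ?_
      rw [smul_smul, mul_comm]
    simp only [lhs_eq]
    rw [Finset.sum_comm]
    have step :
        (∑ p : Fin 2 × Fin 2, ∑ vw : (Fin n → Fin 2) × (Fin n → Fin 2),
          (σ p.1 p.2 * ∏ t : Fin n, σ (vw.1 t) (vw.2 t)) •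
            ((pderiv p.1 (iterD vw.1 f)) ⊗ₜ[ℂ] (pderiv p.2 (iterD vw.2 g))))
        = ∑ r : (Fin 2 × Fin 2) × ((Fin n → Fin 2) × (Fin n → Fin 2)),
          (σ r.1.1 r.1.2 * ∏ t : Fin n, σ (r.2.1 t) (r.2.2 t)) •
            ((pderiv r.1.1 (iterD r.2.1 f)) ⊗ₜ[ℂ] (pderiv r.1.2 (iterD r.2.2 g))) :=
      (Fintype.sum_prod_type' _).symm
    rw [step]
    refine Fintype.sum_equiv
      ((Equiv.prodProdProdComm (Fin 2) (Fin 2) (Fin n → Fin 2) (Fin n → Fin 2)).trans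
        ((Fin.consEquiv (fun _ : Fin (n+1) => Fin 2)).prodCongr
          (Fin.consEquiv (fun _ : Fin (n+1) => Fin 2)))) _ _ ?_
    rintro ⟨⟨i, j⟩, v, w⟩
    simp only [Equiv.trans_apply, Equiv.prodProdProdComm_apply, Equiv.prodCongr_apply,
      Fin.consEquiv_apply, Prod.map]
    rw [Fin.prod_univ_succ]
    simp [Fin.consEquiv, Fin.cons_zero, Fin.cons_succ, iterD_cons]

lemma moyalB_eq (σ : Fin 2 → Fin 2 → ℂ) (n : ℕ) (f g : P2) :
    moyalB σ n f g = ((n.factorial : ℂ))⁻¹ • muP ((Dop σ ^ n) (f ⊗ₜ[ℂ] g)) := by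
  rw [Dpow_tmul, map_sum]
  unfold moyalB
  congr 1
  refine Finset.sum_congr rfl fun vw _ => ?_
  rw [map_smul, muP, LinearMap.mul'_apply]

lemma term_lhs (σ : Fin 2 → Fin 2 → ℂ) (n m : ℕ) (f g h : P2) :
    moyalB σ n f (moyalB σ m g h)
      = ((n.factorial : ℂ)⁻¹ * (m.factorial : ℂ)⁻¹) •
          muP (Mr ((((D12 σ + D13 σ) ^ n) * ((D23 σ) ^ m)) (f ⊗ₜ[ℂ] (g ⊗ₜ[ℂ] h)))) := by
  rw [moyalB_eq, moyalB_eq, TensorProduct.tmul_smul, map_smul, map_smul, smul_smul,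
    Module.End.mul_apply]
  congr 1
  have h1 : f ⊗ₜ[ℂ] muP ((Dop σ ^ m) (g ⊗ₜ[ℂ] h)) = Mr (f ⊗ₜ[ℂ] ((Dop σ ^ m) (g ⊗ₜ[ℂ] h))) := by
    simp [Mr]
  rw [h1, ← D23_pow_tmul, Dop_pow_Mr]

lemma term_rhs (σ : Fin 2 → Fin 2 → ℂ) (n m : ℕ) (f g h : P2) :
    moyalB σ m (moyalB σ n f g) h
      = ((n.factorial : ℂ)⁻¹ * (m.factorial : ℂ)⁻¹) •
          muP (Ml ((((D13 σ + D23 σ) ^ m) * ((D12 σ) ^ n)) (f ⊗ₜ[ℂ] (g ⊗ₜ[ℂ] h)))) := by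
  rw [moyalB_eq, moyalB_eq, ← TensorProduct.smul_tmul', map_smul, map_smul, smul_smul,
    mul_comm ((m.factorial : ℂ)⁻¹), Module.End.mul_apply]
  congr 1
  have h1 : muP ((Dop σ ^ n) (f ⊗ₜ[ℂ] g)) ⊗ₜ[ℂ] h
      = Ml ((LinearMap.lTensor P2 (insR h)) ((Dop σ ^ n) (f ⊗ₜ[ℂ] g))) := by
    rw [Ml_ins]; rfl
  rw [h1, ← D12_pow_ins]
  have h2 : (LinearMap.lTensor P2 (insR h)) (f ⊗ₜ[ℂ] g) = f ⊗ₜ[ℂ] (g ⊗ₜ[ℂ] h) := by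
    simp
  rw [h2, Dop_pow_Ml]

lemma fact_inv (K k : ℕ) (hk : k ≤ K) :
    (K.factorial : ℂ)⁻¹ * (K.choose k : ℂ)
      = (k.factorial : ℂ)⁻¹ * ((K - k).factorial : ℂ)⁻¹ := by
  have := Nat.choose_mul_factorial_mul_factorial hk
  have h1 : (K.choose k : ℂ) * (k.factorial : ℂ) * ((K - k).factorial : ℂ) = (K.factorial : ℂ) := by
    exact_mod_cast congrArg (Nat.cast : ℕ → ℂ) this
  have hK : (K.factorial : ℂ) ≠ 0 := Nat.cast_ne_zero.2 (Nat.factorial_ne_zero K)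
  have hk1 : (k.factorial : ℂ) ≠ 0 := Nat.cast_ne_zero.2 (Nat.factorial_ne_zero k)
  have hk2 : ((K - k).factorial : ℂ) ≠ 0 := Nat.cast_ne_zero.2 (Nat.factorial_ne_zero _)
  field_simp
  linear_combination h1

lemma keyAssoc (σ : Fin 2 → Fin 2 → ℂ) (K : ℕ) (f g h : P2) :
    ∑ nm ∈ Finset.HasAntidiagonal.antidiagonal K, moyalB σ nm.1 f (moyalB σ nm.2 g h)
      = ∑ nm ∈ Finset.HasAntidiagonal.antidiagonal K, moyalB σ nm.2 (moyalB σ nm.1 f g) h := by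
  rw [Finset.Nat.sum_antidiagonal_eq_sum_range_succ_mk,
    Finset.Nat.sum_antidiagonal_eq_sum_range_succ_mk]
  set y : T3 := f ⊗ₜ[ℂ] (g ⊗ₜ[ℂ] h) with hy
  have hC1 : Commute (D12 σ + D13 σ) (D23 σ) :=
    ((comm_D12_D23 σ).add_left (comm_D13_D23 σ))
  have hC2 : Commute (D12 σ) (D13 σ + D23 σ) :=
    ((comm_D12_D13 σ).add_right (comm_D12_D23 σ))
  have lhs_eq : ∀ k ∈ Finset.range (K+1),
      moyalB σ k f (moyalB σ (K - k) g h)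
        = (K.factorial : ℂ)⁻¹ •
            muP (Mr ((((D12 σ + D13 σ) ^ k * (D23 σ) ^ (K - k)) * (K.choose k : Module.End ℂ T3)) y)) := by
    intro k hk
    rw [term_lhs, ← hy]
    simp only [Module.End.mul_apply, Module.End.natCast_apply, map_smul, smul_smul,
      ← Nat.cast_smul_eq_nsmul ℂ (K.choose k)]
    rw [fact_inv K k (Nat.lt_succ_iff.mp (Finset.mem_range.mp hk))]
  have rhs_eq : ∀ k ∈ Finset.range (K+1),
      moyalB σ (K - k) (moyalB σ k f g) h
        = (K.factorial : ℂ)⁻¹ •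
            muP (Mr ((((D12 σ) ^ k * (D13 σ + D23 σ) ^ (K - k)) * (K.choose k : Module.End ℂ T3)) y)) := by
    intro k hk
    rw [term_rhs, ← hy]
    simp only [Module.End.mul_apply, Module.End.natCast_apply, map_smul, smul_smul,
      ← Nat.cast_smul_eq_nsmul ℂ (K.choose k), muMl_eq_muMr]
    rw [fact_inv K k (Nat.lt_succ_iff.mp (Finset.mem_range.mp hk))]
    have hpp := (hC2.pow_pow k (K - k)).eq
    rw [← Module.End.mul_apply (f := (D13 σ + D23 σ) ^ (K - k)),
      ← Module.End.mul_apply (f := D12 σ ^ k), ← hpp]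
  rw [Finset.sum_congr rfl lhs_eq, Finset.sum_congr rfl rhs_eq]
  rw [← Finset.smul_sum, ← Finset.smul_sum]
  refine congrArg _ ?_
  have e1 : ∑ k ∈ Finset.range (K+1),
      muP (Mr ((((D12 σ + D13 σ) ^ k * (D23 σ) ^ (K - k)) * (K.choose k : Module.End ℂ T3)) y))
      = muP (Mr ((((D12 σ + D13 σ) + D23 σ) ^ K) y)) := by
    rw [hC1.add_pow, LinearMap.sum_apply, map_sum, map_sum]
  have e2 : ∑ k ∈ Finset.range (K+1),
      muP (Mr ((((D12 σ) ^ k * (D13 σ + D23 σ) ^ (K - k)) * (K.choose k : Module.End ℂ T3)) y))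
      = muP (Mr (((D12 σ + (D13 σ + D23 σ)) ^ K) y)) := by
    rw [hC2.add_pow, LinearMap.sum_apply, map_sum, map_sum]
  rw [e1, e2, add_assoc]

lemma foldr_pderiv_sum {ι : Type*} (l : List (Fin 2)) (s : Finset ι) (g : ι → P2) :
    l.foldr (fun i p => pderiv i p) (∑ x ∈ s, g x)
      = ∑ x ∈ s, l.foldr (fun i p => pderiv i p) (g x) := by
  induction l with
  | nil => rfl
  | cons i l ih => simp [List.foldr_cons, ih, map_sum]

lemma iterD_sum {ι : Type*} {n : ℕ} (v : Fin n → Fin 2) (s : Finset ι) (g : ι → P2) :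
    iterD v (∑ x ∈ s, g x) = ∑ x ∈ s, iterD v (g x) :=
  foldr_pderiv_sum _ s g

lemma moyalB_sum_right {ι : Type*} (σ : Fin 2 → Fin 2 → ℂ) (n : ℕ) (f : P2)
    (s : Finset ι) (g : ι → P2) :
    moyalB σ n f (∑ x ∈ s, g x) = ∑ x ∈ s, moyalB σ n f (g x) := by
  unfold moyalB
  rw [← Finset.smul_sum]
  congr 1
  rw [Finset.sum_comm]
  refine Finset.sum_congr rfl fun vw _ => ?_
  rw [iterD_sum, Finset.mul_sum, Finset.smul_sum]

lemma moyalB_sum_left {ι : Type*} (σ : Fin 2 → Fin 2 → ℂ) (n : ℕ) (h : P2)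
    (s : Finset ι) (g : ι → P2) :
    moyalB σ n (∑ x ∈ s, g x) h = ∑ x ∈ s, moyalB σ n (g x) h := by
  unfold moyalB
  rw [← Finset.smul_sum]
  congr 1
  rw [Finset.sum_comm]
  refine Finset.sum_congr rfl fun vw _ => ?_
  rw [iterD_sum, Finset.sum_mul, Finset.smul_sum]

open Finset in
lemma coeff_lhs (σ : Fin 2 → Fin 2 → ℂ) (f g h : PowerSeries P2) (N : ℕ) :
    PowerSeries.coeff (R := P2) N (moyalStar σ f (moyalStar σ g h))
      = ∑ p ∈ antidiagonal N, ∑ q ∈ antidiagonal p.2, ∑ r ∈ antidiagonal q.2,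
          ∑ u ∈ antidiagonal r.2,
          moyalB σ u.1 (PowerSeries.coeff (R := P2) p.1 f)
            (moyalB σ u.2 (PowerSeries.coeff (R := P2) q.1 g) (PowerSeries.coeff (R := P2) r.1 h)) := by
  have expand : PowerSeries.coeff (R := P2) N (moyalStar σ f (moyalStar σ g h))
      = ∑ p ∈ antidiagonal N, ∑ q ∈ antidiagonal p.2, ∑ r ∈ antidiagonal q.2,
          ∑ u ∈ antidiagonal r.2,
          moyalB σ p.1 (PowerSeries.coeff (R := P2) q.1 f)
            (moyalB σ r.1 (PowerSeries.coeff (R := P2) u.1 g) (PowerSeries.coeff (R := P2) u.2 h)) := by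
    rw [moyalStar, PowerSeries.coeff_mk]
    refine Finset.sum_congr rfl fun p _ => Finset.sum_congr rfl fun q _ => ?_
    rw [moyalStar, PowerSeries.coeff_mk, moyalB_sum_right]
    refine Finset.sum_congr rfl fun r _ => moyalB_sum_right σ _ _ _ _
  rw [expand]
  rw [Finset.sum_sigma', Finset.sum_sigma', Finset.sum_sigma',
    Finset.sum_sigma', Finset.sum_sigma', Finset.sum_sigma']
  refine Finset.sum_nbij'
    (fun z => ⟨⟨⟨(z.1.1.2.1, z.2.1 + z.2.2 + z.1.1.1.1 + z.1.2.1),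
        (z.2.1, z.2.2 + z.1.1.1.1 + z.1.2.1)⟩, (z.2.2, z.1.1.1.1 + z.1.2.1)⟩,
      (z.1.1.1.1, z.1.2.1)⟩)
    (fun w => ⟨⟨⟨(w.2.1, w.1.1.1.1 + w.2.2 + w.1.1.2.1 + w.1.2.1),
        (w.1.1.1.1, w.2.2 + w.1.1.2.1 + w.1.2.1)⟩, (w.2.2, w.1.1.2.1 + w.1.2.1)⟩,
      (w.1.1.2.1, w.1.2.1)⟩)
    ?_ ?_ ?_ ?_ ?_
  · rintro ⟨⟨⟨⟨n, t⟩, ⟨a, s⟩⟩, ⟨m, w⟩⟩, ⟨b, c⟩⟩ hz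
    simp only [Finset.mem_sigma, Finset.HasAntidiagonal.mem_antidiagonal] at hz ⊢
    refine ⟨⟨⟨?_, ?_⟩, ?_⟩, ?_⟩ <;> first | trivial | omega
  · rintro ⟨⟨⟨⟨a, t⟩, ⟨b, s⟩⟩, ⟨c, K⟩⟩, ⟨n, m⟩⟩ hw
    simp only [Finset.mem_sigma, Finset.HasAntidiagonal.mem_antidiagonal] at hw ⊢
    refine ⟨⟨⟨?_, ?_⟩, ?_⟩, ?_⟩ <;> first | trivial | omega
  · rintro ⟨⟨⟨⟨n, t⟩, ⟨a, s⟩⟩, ⟨m, w⟩⟩, ⟨b, c⟩⟩ hz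
    simp only [Finset.mem_sigma, Finset.HasAntidiagonal.mem_antidiagonal] at hz
    simp only [Sigma.mk.inj_iff, Prod.mk.injEq, heq_iff_eq, and_true, true_and]
    omega
  · rintro ⟨⟨⟨⟨a, t⟩, ⟨b, s⟩⟩, ⟨c, K⟩⟩, ⟨n, m⟩⟩ hw
    simp only [Finset.mem_sigma, Finset.HasAntidiagonal.mem_antidiagonal] at hw
    simp only [Sigma.mk.inj_iff, Prod.mk.injEq, heq_iff_eq, and_true, true_and]
    omega
  · rintro ⟨⟨⟨⟨n, t⟩, ⟨a, s⟩⟩, ⟨m, w⟩⟩, ⟨b, c⟩⟩ _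
    rfl

open Finset in
lemma coeff_rhs (σ : Fin 2 → Fin 2 → ℂ) (f g h : PowerSeries P2) (N : ℕ) :
    PowerSeries.coeff (R := P2) N (moyalStar σ (moyalStar σ f g) h)
      = ∑ p ∈ antidiagonal N, ∑ q ∈ antidiagonal p.2, ∑ r ∈ antidiagonal q.2,
          ∑ u ∈ antidiagonal r.2,
          moyalB σ u.2 (moyalB σ u.1 (PowerSeries.coeff (R := P2) p.1 f)
            (PowerSeries.coeff (R := P2) q.1 g)) (PowerSeries.coeff (R := P2) r.1 h) := by
  have expand : PowerSeries.coeff (R := P2) N (moyalStar σ (moyalStar σ f g) h)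
      = ∑ p ∈ antidiagonal N, ∑ q ∈ antidiagonal p.2, ∑ r ∈ antidiagonal q.1,
          ∑ u ∈ antidiagonal r.2,
          moyalB σ p.1 (moyalB σ r.1 (PowerSeries.coeff (R := P2) u.1 f)
            (PowerSeries.coeff (R := P2) u.2 g)) (PowerSeries.coeff (R := P2) q.2 h) := by
    rw [moyalStar, PowerSeries.coeff_mk]
    refine Finset.sum_congr rfl fun p _ => Finset.sum_congr rfl fun q _ => ?_
    rw [moyalStar, PowerSeries.coeff_mk, moyalB_sum_left]
    refine Finset.sum_congr rfl fun r _ => moyalB_sum_left σ _ _ _ _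
  rw [expand]
  rw [Finset.sum_sigma', Finset.sum_sigma', Finset.sum_sigma',
    Finset.sum_sigma', Finset.sum_sigma', Finset.sum_sigma']
  refine Finset.sum_nbij'
    (fun z => ⟨⟨⟨(z.2.1, z.2.2 + z.1.1.2.2 + z.1.2.1 + z.1.1.1.1),
        (z.2.2, z.1.1.2.2 + z.1.2.1 + z.1.1.1.1)⟩, (z.1.1.2.2, z.1.2.1 + z.1.1.1.1)⟩,
      (z.1.2.1, z.1.1.1.1)⟩)
    (fun w => ⟨⟨⟨(w.2.2, w.2.1 + w.1.1.1.1 + w.1.1.2.1 + w.1.2.1),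
        (w.2.1 + w.1.1.1.1 + w.1.1.2.1, w.1.2.1)⟩, (w.2.1, w.1.1.1.1 + w.1.1.2.1)⟩,
      (w.1.1.1.1, w.1.1.2.1)⟩)
    ?_ ?_ ?_ ?_ ?_
  · rintro ⟨⟨⟨⟨m, t⟩, ⟨x, c⟩⟩, ⟨n, w⟩⟩, ⟨a, b⟩⟩ hz
    simp only [Finset.mem_sigma, Finset.HasAntidiagonal.mem_antidiagonal] at hz ⊢
    refine ⟨⟨⟨?_, ?_⟩, ?_⟩, ?_⟩ <;> first | trivial | omega
  · rintro ⟨⟨⟨⟨a, t⟩, ⟨b, s⟩⟩, ⟨c, K⟩⟩, ⟨n, m⟩⟩ hw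
    simp only [Finset.mem_sigma, Finset.HasAntidiagonal.mem_antidiagonal] at hw ⊢
    refine ⟨⟨⟨?_, ?_⟩, ?_⟩, ?_⟩ <;> first | trivial | omega
  · rintro ⟨⟨⟨⟨m, t⟩, ⟨x, c⟩⟩, ⟨n, w⟩⟩, ⟨a, b⟩⟩ hz
    simp only [Finset.mem_sigma, Finset.HasAntidiagonal.mem_antidiagonal] at hz
    simp only [Sigma.mk.inj_iff, Prod.mk.injEq, heq_iff_eq, and_true, true_and]
    omega
  · rintro ⟨⟨⟨⟨a, t⟩, ⟨b, s⟩⟩, ⟨c, K⟩⟩, ⟨n, m⟩⟩ hw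
    simp only [Finset.mem_sigma, Finset.HasAntidiagonal.mem_antidiagonal] at hw
    simp only [Sigma.mk.inj_iff, Prod.mk.injEq, heq_iff_eq, and_true, true_and]
    omega
  · rintro ⟨⟨⟨⟨m, t⟩, ⟨x, c⟩⟩, ⟨n, w⟩⟩, ⟨a, b⟩⟩ _
    rfl

theorem moyal_associative' (σ : Fin 2 → Fin 2 → ℂ)
    (f g h : PowerSeries P2) :
    moyalStar σ f (moyalStar σ g h) = moyalStar σ (moyalStar σ f g) h := by
  apply PowerSeries.ext; intro N
  rw [coeff_lhs, coeff_rhs]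
  refine Finset.sum_congr rfl fun p _ => Finset.sum_congr rfl fun q _ =>
    Finset.sum_congr rfl fun r _ => ?_
  exact keyAssoc σ r.2 _ _ _

/-- The Moyal product for a constant skew-symmetric `σ` is associative. -/
theorem moyal_associative (σ : Fin 2 → Fin 2 → ℂ) (hσ : ∀ i j, σ i j = -σ j i)
    (f g h : PowerSeries P2) :
    moyalStar σ f (moyalStar σ g h) = moyalStar σ (moyalStar σ f g) h :=
  moyal_associative' σ f g h
end
end

section
/- A general holomorphic Poisson structure on Z_k, written in canonical coordinates as (σ_U ∂_z∧∂_u, σ_V ∂_ξ∧∂_v), has σ_U of the form f_U + z g_U for k = 1, f_U for k = 2, and u f_U + zu g_U + z²u h_U for k ≥ 3, where f, g, h are global functions on Z_k; equivalently H⁰(Z_k, Λ²T_{Z_k}) is generated over global functions by {1, z} for k = 1, {1} for k = 2, and {u, zu, z²u} for k ≥ 3. -/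
/- STATEMENT 8: A general holomorphic Poisson structure on Z_k has U-chart coefficient
σ_U of the form f_U + z g_U (k = 1), f_U (k = 2), u f_U + zu g_U + z²u h_U (k ≥ 3),
with f, g, h global functions; i.e. H⁰(Z_k, Λ²T_{Z_k}) ≅ H⁰(Z_k, O(-k+2)) — spanned
by the monomials z^l u^i with 0 ≤ l ≤ ki - k + 2 — is generated over global functions
(monomials z^l u^i with 0 ≤ l ≤ ki) by {1, z} for k = 1, {1} for k = 2, and
{u, zu, z²u} for k ≥ 3. -/

noncomputable section

abbrev Lk : Type := AddMonoidAlgebra ℂ (ℤ × ℕ)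

def mono (l : ℤ) (i : ℕ) : Lk := AddMonoidAlgebra.single (l, i) (1 : ℂ)

/-- Global sections of the anticanonical bundle `Λ²T_{Z_k} ≅ O(-k+2)`. -/
def poissonSec (k : ℕ) : Submodule ℂ Lk :=
  Submodule.span ℂ {x : Lk | ∃ l i : ℕ, (l : ℤ) ≤ k * i - k + 2 ∧ x = mono l i}

/-- The span of products (global function) · (generator), for a set of generators. -/
def genOverR (k : ℕ) (gens : Set Lk) : Submodule ℂ Lk :=
  Submodule.span ℂ
    {x : Lk | ∃ l i : ℕ, (l : ℤ) ≤ k * i ∧ ∃ g ∈ gens, x = mono l i * g}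

lemma mono_mul (a c : ℤ) (b d : ℕ) : mono a b * mono c d = mono (a + c) (b + d) := by
  simp [mono, AddMonoidAlgebra.single_mul_single, Prod.mk_add_mk]

theorem poisson_structures_Zk (k : ℕ) (hk : 1 ≤ k) :
    (k = 1 → poissonSec k = genOverR k {mono 0 0, mono 1 0})
    ∧ (k = 2 → poissonSec k = genOverR k {mono 0 0})
    ∧ (3 ≤ k → poissonSec k = genOverR k {mono 0 1, mono 1 1, mono 2 1}) := by
  refine ⟨?_, ?_, ?_⟩
  · rintro rfl
    apply le_antisymm <;> rw [poissonSec, genOverR, Submodule.span_le]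
    · rintro x ⟨l, i, hl, rfl⟩
      by_cases h : l ≤ i
      · apply Submodule.subset_span
        refine ⟨l, i, by push_cast; omega, mono 0 0, Or.inl rfl, by rw [mono_mul]; norm_num⟩
      · have hl' : l = i + 1 := by omega
        apply Submodule.subset_span
        refine ⟨i, i, by push_cast; omega, mono 1 0, Or.inr rfl, ?_⟩
        rw [mono_mul, hl']; norm_num
    · rintro x ⟨l, i, hl, g, (rfl | rfl), rfl⟩ <;> rw [mono_mul] <;>
        apply Submodule.subset_span
      · exact ⟨l, i, by push_cast; omega, by norm_num⟩
      · exact ⟨l + 1, i, by push_cast; omega, by norm_num⟩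
  · rintro rfl
    apply le_antisymm <;> rw [poissonSec, genOverR, Submodule.span_le]
    · rintro x ⟨l, i, hl, rfl⟩
      apply Submodule.subset_span
      exact ⟨l, i, by push_cast at hl ⊢; omega, mono 0 0, rfl,
        by rw [mono_mul]; norm_num⟩
    · rintro x ⟨l, i, hl, g, rfl, rfl⟩
      rw [mono_mul]
      apply Submodule.subset_span
      exact ⟨l, i, by push_cast at hl ⊢; omega, by norm_num⟩
  · intro hk3
    apply le_antisymm <;> rw [poissonSec, genOverR, Submodule.span_le]
    · rintro x ⟨l, i, hl, rfl⟩
      cases i with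
      | zero =>
        exfalso
        have : (0:ℤ) ≤ l := Int.ofNat_nonneg l
        have : (3:ℤ) ≤ k := by exact_mod_cast hk3
        simp only [Nat.cast_zero, mul_zero] at hl
        omega
      | succ i' =>
        have hmz : ((k * i' : ℕ) : ℤ) = (k:ℤ) * i' := by push_cast; ring
        have key : l ≤ k * i' + 2 := by
          have : (l:ℤ) ≤ (k:ℤ) * i' + 2 := by
            push_cast at hl
            nlinarith
          omega
        have hle : ((k * i' : ℕ) : ℤ) ≤ (k:ℤ) * i' := le_of_eq hmz
        apply Submodule.subset_span
        by_cases h0 : l ≤ k * i'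
        · refine ⟨l, i', by omega, mono 0 1, by left; rfl, ?_⟩
          rw [mono_mul]; norm_num
        · by_cases h1 : l = k * i' + 1
          · refine ⟨k * i', i', hle, mono 1 1, by right; left; rfl, ?_⟩
            rw [mono_mul, h1]; push_cast; ring_nf
          · have h2 : l = k * i' + 2 := by omega
            refine ⟨k * i', i', hle, mono 2 1, by right; right; rfl, ?_⟩
            rw [mono_mul, h2]; push_cast; ring_nf
    · rintro x ⟨l, i, hl, g, (rfl | rfl | rfl), rfl⟩ <;> rw [mono_mul] <;>
        apply Submodule.subset_span
      · exact ⟨l, i + 1, by push_cast; nlinarith, by norm_num⟩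
      · exact ⟨l + 1, i + 1, by push_cast; nlinarith, by norm_num⟩
      · exact ⟨l + 2, i + 1, by push_cast; nlinarith, by norm_num⟩
end
end

section
/- Every line bundle on a deformation quantization 𝒜 of Z_k is isomorphic to 𝒜(j) for some j ∈ ℤ; i.e. Pic(𝒵_k(σ)) ≅ ℤ. Concretely: given a ⋆-invertible transition function f = z^{-j} + Σ_{n≥1} fₙ ℏⁿ on U∩V, there exist aₙ ∈ O(U), αₙ ∈ O(V) with (1 + Σαₙℏⁿ) ⋆ f ⋆ (1 + Σaₙℏⁿ) = z^{-j}, using that every element of O(U∩V) decomposes as a sum of an element of z^j·O(U) and z^j·O(V) (since H¹(Z_k, O) = 0). -/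
/- STATEMENT 13: Every line bundle on a deformation quantization 𝒜 of Z_k is
isomorphic to 𝒜(j): given a transition function f = z^{-j} + Σ_{n≥1} fₙℏⁿ on U∩V,
there exist aₙ ∈ O(U), αₙ ∈ O(V) with (1 + Σαₙℏⁿ) ⋆ f ⋆ (1 + Σaₙℏⁿ) = z^{-j}
(hence Pic(𝒵_k(σ)) ≅ ℤ).  The star product is given by a family of ℂ-bilinear
bidifferential operators Bₙ with B₀ = multiplication, each preserving O(U) and
O(V); the recursion is solvable because H¹(Z_k, O) = 0, i.e. every function on
U ∩ V splits into a U-part and a V-part. -/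

noncomputable section

/-- Functions holomorphic on the chart `U`. -/
def OU : Submodule ℂ Lk :=
  Submodule.span ℂ {x : Lk | ∃ l i : ℕ, x = mono l i}

/-- Functions holomorphic on the chart `V`. -/
def OV (k : ℕ) : Submodule ℂ Lk :=
  Submodule.span ℂ {x : Lk | ∃ (l : ℤ) (i : ℕ), l ≤ k * i ∧ x = mono l i}

/-- Star product of two `ℏ`-power series with coefficients in `O(U∩V)`,
for the star product `Σ Bₙ ℏⁿ`. -/
def starSeq (B : ℕ → Lk →ₗ[ℂ] Lk →ₗ[ℂ] Lk) (x y : ℕ → Lk) : ℕ → Lk :=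
  fun N => ∑ t ∈ Finset.HasAntidiagonal.antidiagonal N,
    ∑ ab ∈ Finset.HasAntidiagonal.antidiagonal t.2,
    B t.1 (x ab.1) (y ab.2)

-- basic mono lemmas
lemma mono_mul_s13 (l l' : ℤ) (i i' : ℕ) : mono l i * mono l' i' = mono (l+l') (i+i') := by
  simp [mono, AddMonoidAlgebra.single_mul_single]

lemma mono_zero_zero : mono 0 0 = (1 : Lk) := rfl

lemma one_mem_OU : (1 : Lk) ∈ OU := by
  rw [← mono_zero_zero]
  exact Submodule.subset_span ⟨0, 0, by norm_num⟩

lemma one_mem_OV (k : ℕ) : (1 : Lk) ∈ OV k := by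
  rw [← mono_zero_zero]
  exact Submodule.subset_span ⟨0, 0, by simp⟩

-- splitting
lemma split_exists (k : ℕ) (x : Lk) :
    ∃ uv : Lk × Lk, uv.1 ∈ OU ∧ uv.2 ∈ OV k ∧ x = uv.1 + uv.2 := by
  have hx : x ∈ OU ⊔ OV k := by
    induction x using AddMonoidAlgebra.induction_linear with
    | zero => exact zero_mem _
    | add a b ha hb => exact add_mem ha hb
    | single a b =>
        obtain ⟨l, i⟩ := a
        have hb : (AddMonoidAlgebra.single (l, i) b : Lk) = b • mono l i := by
          simp [mono, AddMonoidAlgebra.smul_single']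
        rw [hb]
        by_cases hl : 0 ≤ l
        · refine Submodule.mem_sup_left (Submodule.smul_mem _ _ ?_)
          exact Submodule.subset_span ⟨l.toNat, i, by rw [Int.toNat_of_nonneg hl]⟩
        · refine Submodule.mem_sup_right (Submodule.smul_mem _ _ ?_)
          refine Submodule.subset_span ⟨l, i, ?_, rfl⟩
          have h1 : (0:ℤ) ≤ (k:ℤ) * (i:ℤ) := by positivity
          omega
  obtain ⟨u, hu, v, hv, huv⟩ := Submodule.mem_sup.mp hx
  exact ⟨(u, v), hu, hv, huv.symm⟩

def splitFn (k : ℕ) (x : Lk) : Lk × Lk := Classical.choose (split_exists k x)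

lemma splitFn_spec (k : ℕ) (x : Lk) :
    (splitFn k x).1 ∈ OU ∧ (splitFn k x).2 ∈ OV k ∧ x = (splitFn k x).1 + (splitFn k x).2 :=
  Classical.choose_spec (split_exists k x)

-- starSeq lemmas
lemma starSeq_apply_zero (B : ℕ → Lk →ₗ[ℂ] Lk →ₗ[ℂ] Lk) (x y : ℕ → Lk) :
    starSeq B x y 0 = B 0 (x 0) (y 0) := by
  simp [starSeq]

lemma starSeq_congr (B : ℕ → Lk →ₗ[ℂ] Lk →ₗ[ℂ] Lk) {x x' y y' : ℕ → Lk} {N : ℕ}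
    (hx : ∀ m ≤ N, x m = x' m) (hy : ∀ m ≤ N, y m = y' m) :
    starSeq B x y N = starSeq B x' y' N := by
  unfold starSeq
  refine Finset.sum_congr rfl fun t ht => Finset.sum_congr rfl fun ab hab => ?_
  have h1 := Finset.HasAntidiagonal.mem_antidiagonal.mp ht
  have h2 := Finset.HasAntidiagonal.mem_antidiagonal.mp hab
  rw [hx ab.1 (by omega), hy ab.2 (by omega)]

lemma starSeq_add_left (B : ℕ → Lk →ₗ[ℂ] Lk →ₗ[ℂ] Lk) (x y z : ℕ → Lk) (N : ℕ) :
    starSeq B (fun m => x m + y m) z N = starSeq B x z N + starSeq B y z N := by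
  unfold starSeq
  rw [← Finset.sum_add_distrib]
  refine Finset.sum_congr rfl fun t _ => ?_
  rw [← Finset.sum_add_distrib]
  refine Finset.sum_congr rfl fun ab _ => ?_
  rw [map_add, LinearMap.add_apply]

lemma starSeq_add_right (B : ℕ → Lk →ₗ[ℂ] Lk →ₗ[ℂ] Lk) (x y z : ℕ → Lk) (N : ℕ) :
    starSeq B x (fun m => y m + z m) N = starSeq B x y N + starSeq B x z N := by
  unfold starSeq
  rw [← Finset.sum_add_distrib]
  refine Finset.sum_congr rfl fun t _ => ?_
  rw [← Finset.sum_add_distrib]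
  refine Finset.sum_congr rfl fun ab _ => ?_
  rw [map_add]

lemma starSeq_left_zero (B : ℕ → Lk →ₗ[ℂ] Lk →ₗ[ℂ] Lk) {x : ℕ → Lk} (y : ℕ → Lk) {N p : ℕ}
    (hx : ∀ c < N, x c = 0) (hp : p < N) : starSeq B x y p = 0 := by
  unfold starSeq
  refine Finset.sum_eq_zero fun t ht => Finset.sum_eq_zero fun ab hab => ?_
  have h1 := Finset.HasAntidiagonal.mem_antidiagonal.mp ht
  have h2 := Finset.HasAntidiagonal.mem_antidiagonal.mp hab
  rw [hx ab.1 (by omega), map_zero, LinearMap.zero_apply]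

lemma starSeq_left_top (B : ℕ → Lk →ₗ[ℂ] Lk →ₗ[ℂ] Lk) {x : ℕ → Lk} (y : ℕ → Lk) {N : ℕ}
    (hx : ∀ c < N, x c = 0) : starSeq B x y N = B 0 (x N) (y 0) := by
  unfold starSeq
  rw [Finset.sum_eq_single ((0 : ℕ), N)]
  · rw [Finset.sum_eq_single ((N : ℕ), 0)]
    · intro ab hab hne
      have h2 := Finset.HasAntidiagonal.mem_antidiagonal.mp hab
      have hlt : ab.1 < N := by
        rcases Nat.lt_or_ge ab.1 N with h | h
        · exact h
        · exfalso; apply hne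
          have e1 : ab.1 = N := by omega
          have e2 : ab.2 = 0 := by omega
          exact Prod.ext e1 e2
      rw [hx ab.1 hlt, map_zero, LinearMap.zero_apply]
    · intro h; exact absurd (Finset.HasAntidiagonal.mem_antidiagonal.mpr (by omega)) h
  · intro t ht hne
    have h1 := Finset.HasAntidiagonal.mem_antidiagonal.mp ht
    have h2lt : t.2 < N := by
      rcases Nat.lt_or_ge t.2 N with h | h
      · exact h
      · exfalso; apply hne
        exact Prod.ext (by omega) (by omega)
    refine Finset.sum_eq_zero fun ab hab => ?_
    have h2 := Finset.HasAntidiagonal.mem_antidiagonal.mp hab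
    rw [hx ab.1 (by omega), map_zero, LinearMap.zero_apply]
  · intro h; exact absurd (Finset.HasAntidiagonal.mem_antidiagonal.mpr (by omega)) h

lemma starSeq_right_top (B : ℕ → Lk →ₗ[ℂ] Lk →ₗ[ℂ] Lk) (x : ℕ → Lk) {y : ℕ → Lk} {N : ℕ}
    (hy : ∀ c < N, y c = 0) : starSeq B x y N = B 0 (x 0) (y N) := by
  unfold starSeq
  rw [Finset.sum_eq_single ((0 : ℕ), N)]
  · rw [Finset.sum_eq_single ((0 : ℕ), N)]
    · intro ab hab hne
      have h2 := Finset.HasAntidiagonal.mem_antidiagonal.mp hab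
      have hlt : ab.2 < N := by
        rcases Nat.lt_or_ge ab.2 N with h | h
        · exact h
        · exfalso; apply hne; exact Prod.ext (by omega) (by omega)
      rw [hy ab.2 hlt, map_zero]
    · intro h; exact absurd (Finset.HasAntidiagonal.mem_antidiagonal.mpr (by omega)) h
  · intro t ht hne
    have h1 := Finset.HasAntidiagonal.mem_antidiagonal.mp ht
    have h2lt : t.2 < N := by
      rcases Nat.lt_or_ge t.2 N with h | h
      · exact h
      · exfalso; apply hne; exact Prod.ext (by omega) (by omega)
    refine Finset.sum_eq_zero fun ab hab => ?_
    have h2 := Finset.HasAntidiagonal.mem_antidiagonal.mp hab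
    rw [hy ab.2 (by omega), map_zero]
  · intro h; exact absurd (Finset.HasAntidiagonal.mem_antidiagonal.mpr (by omega)) h

-- the recursive construction
def F (B : ℕ → Lk →ₗ[ℂ] Lk →ₗ[ℂ] Lk) (k : ℕ) (j : ℤ) (f : ℕ → Lk) (N : ℕ) : Lk × Lk :=
  if N = 0 then (1, 1)
  else
    splitFn k (-(mono j 0 * starSeq B
      (starSeq B (fun m => if h : m < N then (F B k j f m).2 else 0) f)
      (fun m => if h : m < N then (F B k j f m).1 else 0) N))
termination_by N
decreasing_by
  · exact h
  · exact h

lemma F_zero (B : ℕ → Lk →ₗ[ℂ] Lk →ₗ[ℂ] Lk) (k : ℕ) (j : ℤ) (f : ℕ → Lk) :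
    F B k j f 0 = (1, 1) := by
  rw [F]; norm_num

lemma F_succ (B : ℕ → Lk →ₗ[ℂ] Lk →ₗ[ℂ] Lk) (k : ℕ) (j : ℤ) (f : ℕ → Lk) {N : ℕ}
    (hN : N ≠ 0) :
    F B k j f N = splitFn k (-(mono j 0 * starSeq B
      (starSeq B (fun m => if h : m < N then (F B k j f m).2 else 0) f)
      (fun m => if h : m < N then (F B k j f m).1 else 0) N)) := by
  rw [F]; simp [hN]

theorem line_bundles_trivialize (k : ℕ) (hk : 1 ≤ k)
    (B : ℕ → Lk →ₗ[ℂ] Lk →ₗ[ℂ] Lk)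
    (hB0 : ∀ x y : Lk, B 0 x y = x * y)
    (hBU : ∀ (n : ℕ) (x y : Lk), x ∈ OU → y ∈ OU → B n x y ∈ OU)
    (hBV : ∀ (n : ℕ) (x y : Lk), x ∈ OV k → y ∈ OV k → B n x y ∈ OV k)
    (j : ℤ) (f : ℕ → Lk) (hf : f 0 = mono (-j) 0) :
    ∃ a α : ℕ → Lk,
      a 0 = 1 ∧ α 0 = 1
      ∧ (∀ n, a n ∈ OU) ∧ (∀ n, α n ∈ OV k)
      ∧ (∀ N : ℕ, starSeq B (starSeq B α f) a N
          = if N = 0 then mono (-j) 0 else 0) := by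
  classical
  set a : ℕ → Lk := fun n => (F B k j f n).1 with ha_def
  set α : ℕ → Lk := fun n => (F B k j f n).2 with hα_def
  have ha0 : a 0 = 1 := by rw [ha_def]; simp [F_zero]
  have hα0 : α 0 = 1 := by rw [hα_def]; simp [F_zero]
  refine ⟨a, α, ha0, hα0, ?_, ?_, ?_⟩
  · intro n
    by_cases hn : n = 0
    · rw [hn, ha0]; exact one_mem_OU
    · rw [ha_def]; simp only; rw [F_succ B k j f hn]
      exact (splitFn_spec k _).1
  · intro n
    by_cases hn : n = 0
    · rw [hn, hα0]; exact one_mem_OV k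
    · rw [hα_def]; simp only; rw [F_succ B k j f hn]
      exact (splitFn_spec k _).2.1
  · intro N
    by_cases hN : N = 0
    · subst hN
      rw [if_pos rfl, starSeq_apply_zero, starSeq_apply_zero, ha0, hα0, hB0, hB0, hf,
        one_mul, mul_one]
    · rw [if_neg hN]
      -- truncated sequences as in F
      set a' : ℕ → Lk := fun m => if h : m < N then (F B k j f m).1 else 0 with ha'
      set α' : ℕ → Lk := fun m => if h : m < N then (F B k j f m).2 else 0 with hα'
      set T : Lk := starSeq B (starSeq B α' f) a' N with hT
      have hFN : F B k j f N = splitFn k (-(mono j 0 * T)) := F_succ B k j f hN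
      have hsplit := splitFn_spec k (-(mono j 0 * T))
      have hkey : a N + α N = -(mono j 0 * T) := by
        rw [ha_def, hα_def]; simp only; rw [hFN]; exact hsplit.2.2.symm
      -- decompositions
      set a'' : ℕ → Lk := fun m => if m = N then 0 else a m with ha''
      set δa : ℕ → Lk := fun m => if m = N then a N else 0 with hδa
      set α'' : ℕ → Lk := fun m => if m = N then 0 else α m with hα''
      set δα : ℕ → Lk := fun m => if m = N then α N else 0 with hδα
      have hae : a = fun m => a'' m + δa m := by
        funext m; by_cases h : m = N <;> simp [ha'', hδa, h]
      have hαe : α = fun m => α'' m + δα m := by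
        funext m; by_cases h : m = N <;> simp [hα'', hδα, h]
      have hsplitH : starSeq B α f = fun p => starSeq B α'' f p + starSeq B δα f p := by
        funext p
        conv_lhs => rw [hαe]
        exact starSeq_add_left B α'' δα f p
      calc starSeq B (starSeq B α f) a N
          = starSeq B (starSeq B α f) a'' N + starSeq B (starSeq B α f) δa N := by
            conv_lhs => rw [hae]
            exact starSeq_add_right B _ a'' δa N
        _ = starSeq B (starSeq B α'' f) a'' N + starSeq B (starSeq B δα f) a'' N
              + starSeq B (starSeq B α f) δa N := by
            rw [hsplitH, starSeq_add_left]
        _ = T + (α N * f 0) * a 0 + (α 0 * f 0) * a N := by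
            congr 1
            · congr 1
              · -- congruence with the truncation
                refine starSeq_congr B (fun m hm => ?_) (fun m hm => ?_)
                · refine starSeq_congr B (fun c hc => ?_) (fun c _ => rfl)
                  by_cases h : c = N
                  · simp only [hα'', hα']; rw [if_pos h, dif_neg (by omega)]
                  · simp only [hα'', hα']; rw [if_neg h, dif_pos (by omega)]
                · by_cases h : m = N
                  · simp only [ha'', ha']; rw [if_pos h, dif_neg (by omega)]
                  · simp only [ha'', ha']; rw [if_neg h, dif_pos (by omega)]
              · -- δα term
                have hδα0 : ∀ c < N, δα c = 0 := by
                  intro c hc; simp only [hδα]; exact if_neg (by omega)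
                have hD0 : ∀ c < N, starSeq B δα f c = 0 := by
                  intro c hc; exact starSeq_left_zero B f hδα0 hc
                rw [starSeq_left_top B a'' hD0,
                  starSeq_left_top B f hδα0, hB0, hB0]
                have h1 : a'' 0 = a 0 := by
                  simp only [ha'']; exact if_neg (by omega)
                have h2 : δα N = α N := by simp [hδα]
                rw [h1, h2]
            · -- δa term
              have hδa0 : ∀ c < N, δa c = 0 := by
                intro c hc; simp only [hδa]; exact if_neg (by omega)
              rw [starSeq_right_top B _ hδa0, starSeq_apply_zero, hB0, hB0]
              have h2 : δa N = a N := by simp [hδa]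
              rw [h2]
        _ = 0 := by
            rw [ha0, hα0, hf, one_mul, mul_one]
            have hinv : mono (-j) 0 * mono j 0 = 1 := by
              rw [mono_mul_s13]; norm_num [mono_zero_zero]
            have : mono (-j) 0 * (a N + α N) = -T := by
              rw [hkey, mul_neg, ← mul_assoc, hinv, one_mul]
            linear_combination this
end
end
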